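/- arXiv:2304.04954 — 2 statements merged into one kernel-verified Lean document; each statement's English description precedes it below -/
import Mathlib

section
/- Let k, α be positive integers with α dividing k, and let δ be a real with 0 < δ ≤ 1/2 and δ²·α ≥ 12·ln(k/α). Suppose m ≤ (1−δ)·k balls are thrown independently and uniformly at random into k/α bins. Then the probability that the maximum load among all bins is greater than α is at most exp(−δ²·α/12). -/
/-!
Exponential moment method. Summing `x ^ load g b` over all `g : ι → β` factors over the balls,
each contributing `x` if it lands in `b` and `1` otherwise, so the sum is `(x + n - 1) ^ m`.
Markov's inequality and a union bound over the `n` bins then bound the overflow probability by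
`n (1 + (x - 1) / n) ^ m / x ^ (α + 1) ≤ n exp (m (x - 1) / n) / x ^ (α + 1)`. The choice
`x = (1 - δ)⁻¹` together with `-log (1 - δ) ≥ δ + δ² / 2` turns this into `n exp (-δ²α / 2)`,
and the hypothesis on `δ` says exactly that `n = k / α ≤ exp (δ²α / 12)`.
-/

open Finset Real

theorem add_sq_div_two_le_neg_log_one_sub {δ : ℝ} (h0 : 0 ≤ δ) (h1 : δ < 1) :
    δ + δ ^ 2 / 2 ≤ -log (1 - δ) := by
  have := sum_le_hasSum (range 2) (fun n _ => by positivity)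
    (hasSum_pow_div_log_of_abs_lt_one (by rwa [abs_of_nonneg h0]))
  norm_num [sum_range_succ] at this
  linarith

namespace BallsAndBins

variable {ι β : Type*} [Fintype ι] [DecidableEq β]

def load (g : ι → β) (b : β) : ℕ := #{i | g i = b}

theorem pow_load_eq_prod {M : Type*} [CommMonoid M] (x : M) (g : ι → β) (b : β) :
    x ^ load g b = ∏ i, if g i = b then x else 1 := by
  rw [prod_ite, prod_const, prod_const_one, mul_one, load]

variable [DecidableEq ι] [Fintype β]

theorem sum_pow_load {R : Type*} [CommRing R] (x : R) (b : β) :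
    ∑ g : ι → β, x ^ load g b = (x + Fintype.card β - 1) ^ Fintype.card ι := by
  have hbin : ∑ c : β, (if c = b then x else 1) = x + Fintype.card β - 1 := by
    rw [Fintype.sum_eq_add_sum_compl b, if_pos rfl,
      sum_congr rfl fun c hc => if_neg (mem_compl.1 hc ∘ mem_singleton.2), sum_const,
      card_compl, card_singleton, nsmul_one, Nat.cast_pred (Fintype.card_pos_iff.2 ⟨b⟩)]
    ring
  simp_rw [pow_load_eq_prod]
  rw [← Fintype.prod_sum fun (_ : ι) (c : β) => if c = b then x else 1, hbin, prod_const, card_univ]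

theorem card_filter_lt_load_mul_le {x : ℝ} (hx : 1 ≤ x) (a : ℕ) (b : β) :
    #{g : ι → β | a < load g b} * x ^ (a + 1) ≤ (x + Fintype.card β - 1) ^ Fintype.card ι := by
  rw [← sum_pow_load, ← nsmul_eq_mul, ← sum_const]
  calc ∑ _g ∈ {g : ι → β | a < load g b}, x ^ (a + 1)
      ≤ ∑ g ∈ {g : ι → β | a < load g b}, x ^ load g b :=
        sum_le_sum fun g hg => pow_le_pow_right₀ hx (mem_filter.1 hg).2
    _ ≤ ∑ g, x ^ load g b :=
        sum_le_sum_of_subset_of_nonneg (filter_subset _ _) fun _ _ _ => by positivity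

theorem card_overflow_mul_le {x : ℝ} (hx : 1 ≤ x) (a : ℕ) :
    #{g : ι → β | ∃ b, a < load g b} * x ^ (a + 1) ≤
      Fintype.card β * (x + Fintype.card β - 1) ^ Fintype.card ι := by
  have hunion : #{g : ι → β | ∃ b, a < load g b} ≤ ∑ b, #{g : ι → β | a < load g b} := by
    refine (card_le_card fun g => ?_).trans card_biUnion_le
    simp
  calc (#{g : ι → β | ∃ b, a < load g b} : ℝ) * x ^ (a + 1)
      ≤ ∑ b, #{g : ι → β | a < load g b} * x ^ (a + 1) := by
        rw [← sum_mul]; gcongr; exact_mod_cast hunion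
    _ ≤ ∑ _b : β, (x + Fintype.card β - 1) ^ Fintype.card ι :=
        sum_le_sum fun b _ => card_filter_lt_load_mul_le hx a b
    _ = _ := by rw [sum_const, card_univ, nsmul_eq_mul]

theorem card_overflow_div_le [Nonempty β] {x : ℝ} (hx : 1 ≤ x) (a : ℕ) :
    (#{g : ι → β | ∃ b, a < load g b} : ℝ) / Fintype.card (ι → β) ≤
      Fintype.card β * exp (Fintype.card ι * (x - 1) / Fintype.card β) / x ^ (a + 1) := by
  set n : ℝ := (Fintype.card β : ℝ)
  have hn : 0 < n := Nat.cast_pos.2 Fintype.card_pos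
  have hbase : x + n - 1 ≤ n * exp ((x - 1) / n) :=
    calc x + n - 1 = n * ((x - 1) / n + 1) := by field_simp; ring
      _ ≤ n * exp ((x - 1) / n) := by gcongr; exact add_one_le_exp _
  rw [Fintype.card_fun, Nat.cast_pow, div_le_div_iff₀ (by positivity) (by positivity)]
  calc (#{g : ι → β | ∃ b, a < load g b} : ℝ) * x ^ (a + 1)
      ≤ n * (x + n - 1) ^ Fintype.card ι := card_overflow_mul_le hx a
    _ ≤ n * (n * exp ((x - 1) / n)) ^ Fintype.card ι := by gcongr; linarith
    _ = n * exp (Fintype.card ι * (x - 1) / n) * n ^ Fintype.card ι := by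
        rw [mul_pow, ← exp_nat_mul, mul_div_assoc]; ring

theorem card_overflow_div_le_exp [Nonempty β] {δ : ℝ} (hδ0 : 0 ≤ δ) (hδ1 : δ < 1) (a : ℕ)
    (hm : (Fintype.card ι : ℝ) ≤ (1 - δ) * (Fintype.card β * a)) :
    (#{g : ι → β | ∃ b, a < load g b} : ℝ) / Fintype.card (ι → β) ≤
      Fintype.card β * exp (-(δ ^ 2 * a / 2)) := by
  set n : ℝ := (Fintype.card β : ℝ)
  set x := (1 - δ)⁻¹
  have hn : 0 < n := Nat.cast_pos.2 Fintype.card_pos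
  have hx : 1 ≤ x := one_le_inv₀ (by linarith) |>.2 (by linarith)
  have hmx : Fintype.card ι * x ≤ n * a := by
    rw [← div_eq_mul_inv, div_le_iff₀ (by linarith)]; linarith
  have hdrift : Fintype.card ι * (x - 1) / n ≤ δ * a := by
    have : x - 1 = δ * x := by linear_combination inv_mul_cancel₀ (by linarith : 1 - δ ≠ 0)
    rw [div_le_iff₀ hn, this]; nlinarith
  have hxpow : exp (a * (δ + δ ^ 2 / 2)) ≤ x ^ (a + 1) :=
    calc exp (a * (δ + δ ^ 2 / 2)) ≤ exp (a * log x) := by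
          gcongr; rw [log_inv]; exact add_sq_div_two_le_neg_log_one_sub hδ0 hδ1
      _ = x ^ a := by rw [exp_nat_mul, exp_log (by positivity)]
      _ ≤ x ^ (a + 1) := pow_le_pow_right₀ hx a.le_succ
  refine (card_overflow_div_le hx a).trans ?_
  rw [div_le_iff₀ (by positivity), mul_assoc]
  gcongr
  calc exp (Fintype.card ι * (x - 1) / n) ≤ exp (δ * a) := exp_le_exp.2 hdrift
    _ = exp (-(δ ^ 2 * a / 2)) * exp (a * (δ + δ ^ 2 / 2)) := by rw [← exp_add]; ring_nf
    _ ≤ exp (-(δ ^ 2 * a / 2)) * x ^ (a + 1) := by gcongr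

end BallsAndBins

/-- **Balls and bins (Lemma 4.7).** Let `α ∣ k`, `0 < δ ≤ 1/2` with
`δ²α ≥ 12 ln(k/α)`, and let `m ≤ (1-δ)k` balls be thrown independently and uniformly
at random into `k/α` bins. Then the probability that some bin receives more than `α`
balls is at most `exp(-δ²α/12)`. -/
theorem ballsAndBins_overflow_probability
    (k α m : ℕ) (hk : 0 < k) (hα : 0 < α) (hdvd : α ∣ k)
    (δ : ℝ) (hδ0 : 0 < δ) (hδhalf : δ ≤ 1 / 2)
    (hδα : 12 * Real.log ((k : ℝ) / (α : ℝ)) ≤ δ ^ 2 * α)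
    (hm : (m : ℝ) ≤ (1 - δ) * k) :
    ((Finset.univ.filter (fun g : Fin m → Fin (k / α) =>
        ∃ b : Fin (k / α),
          α < (Finset.univ.filter (fun i : Fin m => g i = b)).card)).card : ℝ) /
      (Fintype.card (Fin m → Fin (k / α)) : ℝ) ≤
      Real.exp (-(δ ^ 2 * α) / 12) := by
  set n := k / α
  have hk_eq : (k : ℝ) = n * α := by exact_mod_cast (Nat.div_mul_cancel hdvd).symm
  have hn0 : 0 < n := Nat.div_pos (Nat.le_of_dvd hk hdvd) hα
  have : Nonempty (Fin n) := ⟨⟨0, hn0⟩⟩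
  have hbound := BallsAndBins.card_overflow_div_le_exp (ι := Fin m) (β := Fin n) hδ0.le
    (by linarith) α (by simpa only [Fintype.card_fin, hk_eq] using hm)
  have hn : (n : ℝ) ≤ exp (δ ^ 2 * α / 12) := by
    rw [← log_le_iff_le_exp (by exact_mod_cast hn0)]
    rw [hk_eq, mul_div_cancel_right₀ _ (by positivity)] at hδα
    linarith
  rw [Fintype.card_fin] at hbound
  refine (Eq.trans_le ?_ hbound).trans ?_
  · -- only the `Decidable (∃ b, _)` instances differ
    congr!
  calc (n : ℝ) * exp (-(δ ^ 2 * α / 2))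
      ≤ exp (δ ^ 2 * α / 12) * exp (-(δ ^ 2 * α / 2)) := by gcongr
    _ ≤ exp (-(δ ^ 2 * α) / 12) := by
        rw [← exp_add]; gcongr; nlinarith [sq_nonneg δ]
end

section
/- Fix a universe U equipped with a linear order ≤. The LFU (least-frequently used) paging algorithm over U is stable: for every sequence τ, every X ⊆ U, every z ∈ X, and all cache sizes a > b, if Out(LFU_b, τ[X], z) ∩ LFU_a(τz) ≠ ∅ then LFU_b(τ[X]z) ⊆ LFU_a(τz). -/
open scoped Classical

namespace SetAssoc

variable {U : Type*} [LinearOrder U]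

/-- `τ[X]`: the subsequence of `τ` consisting of the requests to items of `X`. -/
noncomputable def restrict (τ : List U) (X : Set U) : List U :=
  τ.filter (fun a => decide (a ∈ X))

/-- The set of items evicted by `A_k` in response to a request `z` after serving `τ`. -/
def Out (A : ℕ → List U → Finset U) (k : ℕ) (τ : List U) (z : U) : Finset U :=
  A k τ \ A k (τ ++ [z])

/-- The LFU cache computed on the *reversed* request sequence (most recent request
first). On a miss with a full (nonempty) cache, the cached item with the smallest
access count `Φ(τz, ·)` (number of accesses so far), ties broken by taking the
`≤`-largest such item, is evicted. -/
def LFUrev (k : ℕ) : List U → Finset U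
  | [] => ∅
  | z :: τ =>
    let C := LFUrev k τ
    if z ∈ C then C
    else if C.card < k then insert z C
    else if hC : C.Nonempty then
      insert z C \
        {(ofLex (C.sup' hC fun y => toLex (OrderDual.toDual ((z :: τ).count y), y))).2}
    else C

/-- The LFU (least-frequently used) paging algorithm: `LFU k σ` is the cache of size
`k` after serving the request sequence `σ`. -/
def LFU (k : ℕ) (σ : List U) : Finset U :=
  LFUrev k σ.reverse

/-!
Call an item more evictable than another when its key (access count reversed, then the item
itself) is larger; LFU evicts the most evictable cached item. The invariant behind stability: an
item that has been requested but is not cached is beaten by at most one cached item, namely the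
last one inserted.

Let LFU_b evict `m` on request `z` after `τ[X]`, with `m ∈ LFU_a(τz)`, and suppose some `u ≠ m`
of `LFU_b(τ[X])` is missing from `LFU_a(τz)`. Items of `X` have the same counts in `τ[X]` as in
`τ`, so `m` beats `u`. If LFU_a has a free slot it holds all of `τ`, hence `u`. If `z` is a hit for
LFU_a, then `z` and `m` cannot both beat `u`, so `u` beats `z`, and then `u` and `m` both beat `z`
in `LFU_b(τ[X])`. If LFU_a evicts some `e ≠ m` on `z`, then `e` beats `m`, so `u ≠ e` was not
cached and `m`, `e` both beat `u`.
-/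

noncomputable def evictKey (l : List U) (y : U) : Lex (ℕᵒᵈ × U) :=
  toLex (OrderDual.toDual (l.count y), y)

lemma evictKey_ne {l l' : List U} {p q : U} (h : p ≠ q) : evictKey l p ≠ evictKey l' q :=
  fun he => h (congrArg (fun x => (ofLex x).2) he)

lemma evictKey_cons_of_ne {v p : U} (h : p ≠ v) (l : List U) :
    evictKey (v :: l) p = evictKey l p := by
  rw [evictKey, evictKey, List.count_cons_of_ne h.symm]

lemma evictKey_cons_le (v q : U) (l : List U) : evictKey (v :: l) q ≤ evictKey l q := by
  rcases eq_or_ne q v with rfl | hq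
  · rw [evictKey, evictKey, List.count_cons_self, Prod.Lex.toLex_le_toLex]
    exact Or.inl (Nat.lt_succ_self _)
  · rw [evictKey_cons_of_ne hq]

lemma evictKey_lt_of_cons {v p q : U} {l : List U} (hp : p ≠ v)
    (h : evictKey (v :: l) p < evictKey (v :: l) q) : evictKey l p < evictKey l q :=
  evictKey_cons_of_ne hp l ▸ h.trans_le (evictKey_cons_le v q l)

lemma evictKey_reverse (l : List U) : evictKey l.reverse = evictKey l := by
  funext y
  rw [evictKey, evictKey, List.count_reverse]

lemma evictKey_restrict (τ : List U) {X : Set U} {p : U} (hp : p ∈ X) :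
    evictKey (restrict τ X) p = evictKey τ p := by
  rw [evictKey, evictKey, restrict, List.count_filter (by simpa using hp)]

noncomputable def victim (l : List U) (C : Finset U) (hC : C.Nonempty) : U :=
  (ofLex (C.sup' hC (evictKey l))).2

lemma victim_mem_and_evictKey_lt (l : List U) {C : Finset U} (hC : C.Nonempty) :
    victim l C hC ∈ C ∧ ∀ d ∈ C, d ≠ victim l C hC → evictKey l d < evictKey l (victim l C hC) := by
  obtain ⟨e, he, hsup⟩ := Finset.exists_mem_eq_sup' hC (evictKey l)
  have hvictim : victim l C hC = e := by rw [victim, hsup]; rfl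
  refine hvictim ▸ ⟨he, fun d hd hde => lt_of_le_of_ne ?_ (evictKey_ne hde)⟩
  exact hsup ▸ Finset.le_sup' (evictKey l) hd

lemma LFUrev_cons (k : ℕ) (z : U) (ρ : List U) :
    LFUrev k (z :: ρ) =
      if z ∈ LFUrev k ρ then LFUrev k ρ
      else if (LFUrev k ρ).card < k then insert z (LFUrev k ρ)
      else if hC : (LFUrev k ρ).Nonempty then insert z (LFUrev k ρ) \ {victim (z :: ρ) _ hC}
      else LFUrev k ρ := rfl

lemma LFUrev_cons_subset_insert (k : ℕ) (z : U) (ρ : List U) :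
    LFUrev k (z :: ρ) ⊆ insert z (LFUrev k ρ) := by
  rw [LFUrev_cons]
  split_ifs
  · exact Finset.subset_insert _ _
  · exact subset_rfl
  · exact Finset.sdiff_subset
  · exact Finset.subset_insert _ _

lemma mem_of_mem_LFUrev {k : ℕ} {ρ : List U} {x : U} (hx : x ∈ LFUrev k ρ) : x ∈ ρ := by
  induction ρ with
  | nil => simp [LFUrev] at hx
  | cons v ρ ih =>
    rcases Finset.mem_insert.1 (LFUrev_cons_subset_insert k v ρ hx) with rfl | h
    exacts [List.mem_cons_self, List.mem_cons_of_mem v (ih h)]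

lemma card_LFUrev_le (k : ℕ) (ρ : List U) : (LFUrev k ρ).card ≤ k := by
  induction ρ with
  | nil => simp [LFUrev]
  | cons v ρ ih =>
    rw [LFUrev_cons]
    split_ifs with hv hcard hC
    · exact ih
    · rw [Finset.card_insert_of_notMem hv]; omega
    · rw [Finset.sdiff_singleton_eq_erase, Finset.card_erase_of_mem
        (Finset.mem_insert_of_mem (victim_mem_and_evictKey_lt _ hC).1),
        Finset.card_insert_of_notMem hv]
      exact ih
    · exact ih

lemma pos_of_mem_LFUrev {k : ℕ} {ρ : List U} {x : U} (hx : x ∈ LFUrev k ρ) : 0 < k :=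
  (Finset.card_pos.2 ⟨x, hx⟩).trans_le (card_LFUrev_le k ρ)

lemma mem_LFUrev_cons_self {k : ℕ} (hk : 0 < k) (z : U) (ρ : List U) :
    z ∈ LFUrev k (z :: ρ) := by
  rw [LFUrev_cons]
  split_ifs with hz hcard hC
  · exact hz
  · exact Finset.mem_insert_self _ _
  · exact Finset.mem_sdiff.2 ⟨Finset.mem_insert_self _ _, fun h =>
      hz (Finset.mem_singleton.1 h ▸ (victim_mem_and_evictKey_lt _ hC).1)⟩
  · simp [Finset.not_nonempty_iff_eq_empty.1 hC, hk] at hcard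

lemma LFUrev_eq_toFinset_of_card_lt {k : ℕ} {ρ : List U} (h : (LFUrev k ρ).card < k) :
    LFUrev k ρ = ρ.toFinset := by
  induction ρ with
  | nil => rfl
  | cons v ρ ih =>
    rw [LFUrev_cons] at h ⊢
    rw [List.toFinset_cons]
    split_ifs at h ⊢ with hv hcard hC
    · rw [ih h, Finset.insert_eq_of_mem (ih h ▸ hv)]
    · rw [ih hcard]
    · have := Finset.card_le_card_sdiff_add_card (s := insert v (LFUrev k ρ))
        (t := {victim (v :: ρ) _ hC})
      rw [Finset.card_insert_of_notMem hv, Finset.card_singleton] at this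
      omega
    · simp [Finset.not_nonempty_iff_eq_empty.1 hC] at h hcard
      omega

structure Evicts (k : ℕ) (z : U) (ρ : List U) (e : U) : Prop where
  mem : e ∈ LFUrev k ρ
  request_notMem : z ∉ LFUrev k ρ
  eq : LFUrev k (z :: ρ) = insert z (LFUrev k ρ) \ {e}
  -- keys before the request: they agree with LFU's own, as `z` is not cached
  evictKey_lt : ∀ d ∈ LFUrev k ρ, d ≠ e → evictKey ρ d < evictKey ρ e

lemma LFUrev_cons_cases (k : ℕ) (z : U) (ρ : List U) :
    LFUrev k (z :: ρ) = LFUrev k ρ ∨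
      (LFUrev k (z :: ρ) = insert z (LFUrev k ρ) ∧ LFUrev k ρ = ρ.toFinset) ∨
      ∃ e, Evicts k z ρ e := by
  rw [LFUrev_cons]
  split_ifs with hz hcard hC
  · exact Or.inl rfl
  · exact Or.inr (Or.inl ⟨rfl, LFUrev_eq_toFinset_of_card_lt hcard⟩)
  · obtain ⟨he, hlt⟩ := victim_mem_and_evictKey_lt (z :: ρ) hC
    have hne : ∀ d ∈ LFUrev k ρ, d ≠ z := fun d hd h => hz (h ▸ hd)
    refine Or.inr (Or.inr ⟨_, ⟨he, hz, by rw [LFUrev_cons, if_neg hz, if_neg hcard, dif_pos hC], ?_⟩⟩)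
    intro d hd hde
    simpa only [evictKey_cons_of_ne (hne d hd), evictKey_cons_of_ne (hne _ he)] using hlt d hd hde
  · exact Or.inl rfl

namespace Evicts

variable {k : ℕ} {z : U} {ρ : List U} {e : U}

lemma eq_of_mem_of_notMem (he : Evicts k z ρ e) {y : U} (hy : y ∈ LFUrev k ρ)
    (hy' : y ∉ LFUrev k (z :: ρ)) : y = e := by
  by_contra hye
  exact hy' (he.eq ▸ Finset.mem_sdiff.2 ⟨Finset.mem_insert_of_mem hy, by simpa using hye⟩)

lemma mem_of_mem_cons (he : Evicts k z ρ e) {d : U} (hd : d ∈ LFUrev k (z :: ρ)) (hdz : d ≠ z) :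
    d ∈ LFUrev k ρ ∧ d ≠ e := by
  rw [he.eq, Finset.mem_sdiff, Finset.mem_insert, Finset.mem_singleton] at hd
  exact ⟨hd.1.resolve_left hdz, hd.2⟩

end Evicts

lemma evicts_of_mem_of_notMem {k : ℕ} {z : U} {ρ : List U} {m : U} (hm : m ∈ LFUrev k ρ)
    (hm' : m ∉ LFUrev k (z :: ρ)) : Evicts k z ρ m := by
  rcases LFUrev_cons_cases k z ρ with hD | ⟨hD, -⟩ | ⟨e, he⟩
  · exact absurd (hD ▸ hm) hm'
  · exact absurd (hD ▸ Finset.mem_insert_of_mem hm) hm'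
  · exact he.eq_of_mem_of_notMem hm hm' ▸ he

/-- An older cached item beating `y` would, together with the item evicted meanwhile (which beats
it), give two items beating `y` one step earlier. -/
theorem subsingleton_evictKey_gt {k : ℕ} {ρ : List U} {y : U} (hy : y ∈ ρ)
    (hy' : y ∉ LFUrev k ρ) : {d | d ∈ LFUrev k ρ ∧ evictKey ρ y < evictKey ρ d}.Subsingleton := by
  intro d₁ ⟨hd₁, hb₁⟩ d₂ ⟨hd₂, hb₂⟩
  induction ρ generalizing y d₁ d₂ with
  | nil => simp at hy
  | cons v ρ ih =>
    have hyv : y ≠ v := fun h => hy' (h ▸ mem_LFUrev_cons_self (pos_of_mem_LFUrev hd₁) v ρ)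
    have hyρ : y ∈ ρ := (List.mem_cons.1 hy).resolve_left hyv
    rcases LFUrev_cons_cases k v ρ with hD | ⟨hD, hcold⟩ | ⟨e, he⟩
    · rw [hD] at hy' hd₁ hd₂
      exact ih hyρ hy' hd₁ (evictKey_lt_of_cons hyv hb₁) hd₂ (evictKey_lt_of_cons hyv hb₂)
    · exact absurd (hD ▸ Finset.mem_insert_of_mem (hcold ▸ List.mem_toFinset.2 hyρ)) hy'
    · have hnew : ∀ d ∈ LFUrev k (v :: ρ), evictKey (v :: ρ) y < evictKey (v :: ρ) d → d = v := by
        intro d hd hb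
        by_contra hdv
        obtain ⟨hdC, hdne⟩ := he.mem_of_mem_cons hd hdv
        have hyd : evictKey ρ y < evictKey ρ d := evictKey_lt_of_cons hyv hb
        have hde : evictKey ρ d < evictKey ρ e := he.evictKey_lt d hdC hdne
        by_cases hyC : y ∈ LFUrev k ρ
        · exact (he.eq_of_mem_of_notMem hyC hy' ▸ hyd.trans hde).false
        · exact hde.ne (congrArg _ (ih hyρ hyC hdC hyd he.mem (hyd.trans hde)))
      rw [hnew d₁ hd₁ hb₁, hnew d₂ hd₂ hb₂]

lemma Evicts.evictKey_lt_request {k : ℕ} {z : U} {ρ : List U} {e u : U} (he : Evicts k z ρ e)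
    (hu : u ∈ LFUrev k ρ) (hue : u ≠ e) (hz : z ∈ ρ) : evictKey ρ u < evictKey ρ z := by
  have huz : u ≠ z := fun h => he.request_notMem (h ▸ hu)
  refine (lt_or_gt_of_ne (evictKey_ne huz)).resolve_right fun hzu => hue ?_
  exact subsingleton_evictKey_gt hz he.request_notMem ⟨hu, hzu⟩
    ⟨he.mem, hzu.trans (he.evictKey_lt u hu hue)⟩

lemma mem_LFUrev_cons_of_evictKey_lt {k : ℕ} {σ : List U} {z u m : U} (hu : u ∈ σ)
    (hm : m ∈ LFUrev k (z :: σ)) (hmz : m ≠ z) (hum : evictKey σ u < evictKey σ m)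
    (hzu : z ∈ LFUrev k σ → evictKey σ u < evictKey σ z) : u ∈ LFUrev k (z :: σ) := by
  by_contra hu'
  rcases LFUrev_cons_cases k z σ with hD | ⟨hD, hcold⟩ | ⟨e, he⟩
  · have hzD : z ∈ LFUrev k σ := hD ▸ mem_LFUrev_cons_self (pos_of_mem_LFUrev hm) z σ
    rw [hD] at hm hu'
    exact hmz (subsingleton_evictKey_gt hu hu' ⟨hm, hum⟩ ⟨hzD, hzu hzD⟩)
  · exact hu' (hD ▸ Finset.mem_insert_of_mem (hcold ▸ List.mem_toFinset.2 hu))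
  · obtain ⟨hmD, hme⟩ := he.mem_of_mem_cons hm hmz
    have hme' := he.evictKey_lt m hmD hme
    by_cases huD : u ∈ LFUrev k σ
    · exact (he.eq_of_mem_of_notMem huD hu' ▸ hum.trans hme').false
    · exact hme (subsingleton_evictKey_gt hu huD ⟨hmD, hum⟩ ⟨he.mem, hum.trans hme'⟩)

/-- **LFU is stable.** -/
theorem lfu_isStable :
    ∀ (τ : List U) (X : Set U) (z : U), z ∈ X →
      ∀ a b : ℕ, b < a →
        (Out (LFU (U := U)) b (restrict τ X) z ∩ LFU a (τ ++ [z])).Nonempty →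
        LFU b (restrict τ X ++ [z]) ⊆ LFU a (τ ++ [z]) := by
  intro τ X z hzX a b hba ⟨m, hm⟩
  simp only [Out, LFU, List.reverse_append, List.reverse_cons, List.reverse_nil, List.nil_append,
    List.singleton_append, Finset.mem_inter, Finset.mem_sdiff] at hm ⊢
  set ρ := (restrict τ X).reverse
  have hρ : ∀ {p}, p ∈ ρ ↔ p ∈ τ.reverse ∧ p ∈ X := by simp [ρ, restrict]
  have hkey : ∀ {p}, p ∈ X → evictKey ρ p = evictKey τ.reverse p := fun hp => by
    rw [evictKey_reverse, evictKey_reverse, evictKey_restrict τ hp]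
  obtain ⟨⟨hmC, hmC'⟩, hmD'⟩ := hm
  have he := evicts_of_mem_of_notMem hmC hmC'
  rw [he.eq]
  intro u hu
  rw [Finset.mem_sdiff, Finset.mem_insert, Finset.mem_singleton] at hu
  obtain ⟨rfl | huC, hum⟩ := hu
  · exact mem_LFUrev_cons_self (by omega) u _
  have hmz : m ≠ z := fun h => he.request_notMem (h ▸ hmC)
  obtain ⟨huτ, huX⟩ := hρ.1 (mem_of_mem_LFUrev huC)
  have hmX := (hρ.1 (mem_of_mem_LFUrev hmC)).2
  refine mem_LFUrev_cons_of_evictKey_lt huτ hmD' hmz ?_ fun hzD => ?_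
  · rw [← hkey huX, ← hkey hmX]
    exact he.evictKey_lt u huC hum
  · rw [← hkey huX, ← hkey hzX]
    exact he.evictKey_lt_request huC hum (hρ.2 ⟨mem_of_mem_LFUrev hzD, hzX⟩)

end SetAssoc
end
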